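/- arXiv:2208.13089 — 7 statements merged into one kernel-verified Lean document; each statement's English description precedes it below -/
import Mathlib

section
/- Let T₀ be a closed densely defined operator on a Hilbert space H, and let W : H → H be a bounded operator with Re⟨(W − I)u, u⟩ ≥ 0 for all u ∈ H. Then the bounded operator I + (T₀*T₀ + I)^{−1/2}(W − I)(T₀*T₀ + I)^{−1/2} is boundedly invertible with inverse of norm at most 1, and consequently the operator T₀*T₀ + W (defined on dom(T₀*T₀)) is boundedly invertible with ‖(T₀*T₀ + W)^{−1}‖ ≤ 1. -/
/-!
The operator `A = I + R(W - I)R` is coercive: `Re⟨Au, u⟩ = ‖u‖² + Re⟨(W - I)Ru, Ru⟩ ≥ ‖u‖²`.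
Hence `‖u‖ ≤ ‖Au‖`, the range of `A` is closed, and it is dense because a vector orthogonal
to it has `⟨Au, u⟩ = 0`; so `A` is invertible with `‖A⁻¹‖ ≤ 1`. For `G = R A⁻¹ R` and any `y`,
`v = A⁻¹Ry` satisfies `R(y - (W - I)Rv) = v`, so `Gy = Rv = R²(y - (W - I)Gy)` lies in
`dom S` with `(S + I)Gy = y - (W - I)Gy`, i.e. `(S + W)Gy = y`. Finally `S + W` is also
coercive on `dom S`, since `Re⟨Sx, x⟩ = ‖T₀x‖² ≥ 0`; this gives `‖G‖ ≤ 1` and `G(S + W) = I`.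
-/

open scoped InnerProductSpace

section

open RCLike

variable {𝕜 E : Type*} [RCLike 𝕜] [NormedAddCommGroup E] [InnerProductSpace 𝕜 E]

theorem norm_le_norm_of_norm_sq_le_re_inner {x y : E} (h : ‖x‖ ^ 2 ≤ re ⟪y, x⟫_𝕜) :
    ‖x‖ ≤ ‖y‖ := by
  rcases (norm_nonneg x).eq_or_lt with hx | hx
  · simp [← hx]
  · refine le_of_mul_le_mul_right ?_ hx
    calc ‖x‖ * ‖x‖ = ‖x‖ ^ 2 := (sq _).symm
      _ ≤ ‖y‖ * ‖x‖ := h.trans (re_inner_le_norm y x)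

namespace LinearPMap

variable {S : E →ₗ.[𝕜] E} {W : E →L[𝕜] E}

theorem norm_le_norm_apply_add (hS : ∀ x : S.domain, 0 ≤ re ⟪S x, (x : E)⟫_𝕜)
    (hW : ∀ u, 0 ≤ re ⟪W u - u, u⟫_𝕜) (x : S.domain) : ‖(x : E)‖ ≤ ‖S x + W x‖ := by
  refine norm_le_norm_of_norm_sq_le_re_inner (𝕜 := 𝕜) ?_
  have : ⟪S x + W x, (x : E)⟫_𝕜 = ⟪S x, (x : E)⟫_𝕜 + ⟪W x - x, (x : E)⟫_𝕜 + ⟪(x : E), x⟫_𝕜 := by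
    rw [← inner_add_left, ← inner_add_left (𝕜 := 𝕜)]
    abel_nf
  rw [this, _root_.map_add, _root_.map_add, inner_self_eq_norm_sq]
  linarith [hS x, hW x]

theorem opNorm_le_one_of_apply_add_eq (hS : ∀ x : S.domain, 0 ≤ re ⟪S x, (x : E)⟫_𝕜)
    (hW : ∀ u, 0 ≤ re ⟪W u - u, u⟫_𝕜) {G : E →L[𝕜] E}
    (hG : ∀ y, ∃ h : G y ∈ S.domain, S ⟨G y, h⟩ + W (G y) = y) : ‖G‖ ≤ 1 :=
  G.opNorm_le_bound zero_le_one fun y ↦ by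
    obtain ⟨h, hy⟩ := hG y
    simpa [hy] using norm_le_norm_apply_add hS hW ⟨G y, h⟩

theorem apply_apply_add_eq (hS : ∀ x : S.domain, 0 ≤ re ⟪S x, (x : E)⟫_𝕜)
    (hW : ∀ u, 0 ≤ re ⟪W u - u, u⟫_𝕜) {G : E →L[𝕜] E}
    (hG : ∀ y, ∃ h : G y ∈ S.domain, S ⟨G y, h⟩ + W (G y) = y) (x : S.domain) :
    G (S x + W x) = x := by
  obtain ⟨h, hx⟩ := hG (S x + W x)
  have := norm_le_norm_apply_add hS hW (⟨G (S x + W x), h⟩ - x)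
  rw [map_sub, Submodule.coe_sub, _root_.map_sub W] at this
  rwa [sub_add_sub_comm, hx, sub_self, norm_zero, norm_le_zero_iff, sub_eq_zero] at this

theorem exists_mem_domain_apply_add_eq {R J : E →L[𝕜] E}
    (hR : ∀ u, ∃ h : R (R u) ∈ S.domain, S ⟨R (R u), h⟩ + R (R u) = u)
    (hJ : (1 + R ∘L ((W - 1) ∘L R)) ∘L J = 1) (y : E) :
    ∃ h : R (J (R y)) ∈ S.domain, S ⟨R (J (R y)), h⟩ + W (R (J (R y))) = y := by
  set v := J (R y)
  have hv : v + R (W (R v) - R v) = R y := by simpa using congr($hJ (R y))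
  have hz : R (R (y - (W (R v) - R v))) = R v := by
    rw [_root_.map_sub R y, ← hv, add_sub_cancel_right]
  obtain ⟨h, hs⟩ := hz ▸ hR (y - (W (R v) - R v))
  exact ⟨h, by linear_combination (norm := module) hs⟩

end LinearPMap

variable [CompleteSpace E]

theorem ContinuousLinearMap.exists_inverse_norm_le_one_of_coercive (A : E →L[𝕜] E)
    (hA : ∀ u, ‖u‖ ^ 2 ≤ re ⟪A u, u⟫_𝕜) :
    ∃ J : E →L[𝕜] E, ‖J‖ ≤ 1 ∧ A ∘L J = 1 ∧ J ∘L A = 1 := by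
  have hlow (u : E) : ‖u‖ ≤ ‖A u‖ := norm_le_norm_of_norm_sq_le_re_inner (hA u)
  have hanti : AntilipschitzWith 1 A := A.antilipschitz_of_bound (by simpa using hlow)
  have : CompleteSpace A.range :=
    (hanti.isClosed_range A.uniformContinuous).completeSpace_coe
  have hrange : A.range = ⊤ := by
    refine Submodule.orthogonal_eq_bot_iff.mp (Submodule.eq_bot_iff _ |>.mpr fun u hu ↦ ?_)
    have h0 : ⟪A u, u⟫_𝕜 = 0 := (Submodule.mem_orthogonal _ u).mp hu (A u) ⟨u, rfl⟩
    simpa [h0] using hA u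
  let e := ContinuousLinearEquiv.ofBijective A (LinearMap.ker_eq_bot.mpr hanti.injective) hrange
  refine ⟨e.symm, ?_, ?_, ?_⟩
  · refine ContinuousLinearMap.opNorm_le_bound _ zero_le_one fun y ↦ (hlow _).trans_eq ?_
    rw [one_mul]
    exact congrArg norm (e.apply_symm_apply y)
  · ext y; exact e.apply_symm_apply y
  · ext y; exact e.symm_apply_apply y

theorem norm_sq_le_re_inner_one_add_comp_sub_one_comp {R W : E →L[𝕜] E}
    (hR : IsSelfAdjoint R) (hW : ∀ u, 0 ≤ re ⟪W u - u, u⟫_𝕜) (u : E) :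
    ‖u‖ ^ 2 ≤ re ⟪(1 + R ∘L ((W - 1) ∘L R)) u, u⟫_𝕜 := by
  have : ⟪(1 + R ∘L ((W - 1) ∘L R)) u, u⟫_𝕜 = ⟪u, u⟫_𝕜 + ⟪W (R u) - R u, R u⟫_𝕜 := by
    simp only [add_apply, one_apply_eq_self, ContinuousLinearMap.comp_apply, sub_apply,
      inner_add_left]
    exact congrArg (⟪u, u⟫_𝕜 + ·) (hR.isSymmetric _ u)
  rw [this, map_add, inner_self_eq_norm_sq]
  linarith [hW (R u)]

end

theorem stmt_3_general {H : Type*} [NormedAddCommGroup H] [InnerProductSpace ℂ H] [CompleteSpace H]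
    (T0 : H →ₗ.[ℂ] H)
    (S : H →ₗ.[ℂ] H)
    (hSdom : ∀ x, x ∈ S.domain → x ∈ T0.domain)
    (hSform : ∀ (x : S.domain) (y : T0.domain),
      ⟪S x, (y : H)⟫_ℂ = ⟪T0 ⟨(x : H), hSdom _ x.2⟩, T0 y⟫_ℂ)
    (R : H →L[ℂ] H) (hRsa : IsSelfAdjoint R)
    (hRsq : ∀ u : H, ∃ h : R (R u) ∈ S.domain, S ⟨R (R u), h⟩ + R (R u) = u)
    (W : H →L[ℂ] H) (hW : ∀ u : H, 0 ≤ (⟪W u - u, u⟫_ℂ).re) :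
    (∃ J : H →L[ℂ] H, ‖J‖ ≤ 1 ∧
      (1 + R ∘L ((W - 1) ∘L R)) ∘L J = 1 ∧ J ∘L (1 + R ∘L ((W - 1) ∘L R)) = 1) ∧
    (∃ G : H →L[ℂ] H, ‖G‖ ≤ 1 ∧
      (∀ y : H, ∃ h : G y ∈ S.domain, S ⟨G y, h⟩ + W (G y) = y) ∧
      (∀ x : S.domain, G (S x + W (x : H)) = (x : H))) := by
  have hS (x : S.domain) : 0 ≤ (⟪S x, (x : H)⟫_ℂ).re := by
    rw [hSform x ⟨x, hSdom _ x.2⟩]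
    exact inner_self_nonneg (𝕜 := ℂ)
  obtain ⟨J, hJ, hAJ, hJA⟩ := (1 + R ∘L ((W - 1) ∘L R)).exists_inverse_norm_le_one_of_coercive
    (norm_sq_le_re_inner_one_add_comp_sub_one_comp hRsa hW)
  have hG := LinearPMap.exists_mem_domain_apply_add_eq (S := S) hRsq hAJ
  exact ⟨⟨J, hJ, hAJ, hJA⟩, R ∘L J ∘L R, LinearPMap.opNorm_le_one_of_apply_add_eq hS hW hG, hG,
    LinearPMap.apply_apply_add_eq hS hW hG⟩

/-- Let `T₀` be closed densely defined, `S = T₀*T₀` (the self-adjoint operator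
associated with the form `‖T₀x‖²`), `R = (T₀*T₀ + I)^{-1/2}` (the positive self-adjoint square
root of the inverse of `S + I`), and `W` bounded with `Re ⟨(W−I)u, u⟩ ≥ 0`.  Then
`I + R(W−I)R` is boundedly invertible with inverse of norm at most `1`, and `S + W` (on
`dom S`) is boundedly invertible with inverse of norm at most `1`. -/
theorem stmt_3 {H : Type*} [NormedAddCommGroup H] [InnerProductSpace ℂ H] [CompleteSpace H]
    (T0 : H →ₗ.[ℂ] H) (hdense : Dense (T0.domain : Set H))
    (hclosed : IsClosed (T0.graph : Set (H × H)))
    (S : H →ₗ.[ℂ] H)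
    (hSdom : ∀ x, x ∈ S.domain → x ∈ T0.domain)
    (hSform : ∀ (x : S.domain) (y : T0.domain),
      ⟪S x, (y : H)⟫_ℂ = ⟪T0 ⟨(x : H), hSdom _ x.2⟩, T0 y⟫_ℂ)
    (R : H →L[ℂ] H) (hRsa : IsSelfAdjoint R)
    (hRpos : ∀ u : H, 0 ≤ (⟪R u, u⟫_ℂ).re)
    (hRsq : ∀ u : H, ∃ h : R (R u) ∈ S.domain, S ⟨R (R u), h⟩ + R (R u) = u)
    (hRsq' : ∀ x : S.domain, R (R (S x + (x : H))) = (x : H))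
    (W : H →L[ℂ] H) (hW : ∀ u : H, 0 ≤ (⟪W u - u, u⟫_ℂ).re) :
    (∃ J : H →L[ℂ] H, ‖J‖ ≤ 1 ∧
      (1 + R ∘L ((W - 1) ∘L R)) ∘L J = 1 ∧ J ∘L (1 + R ∘L ((W - 1) ∘L R)) = 1) ∧
    (∃ G : H →L[ℂ] H, ‖G‖ ≤ 1 ∧
      (∀ y : H, ∃ h : G y ∈ S.domain, S ⟨G y, h⟩ + W (G y) = y) ∧
      (∀ x : S.domain, G (S x + W (x : H)) = (x : H))) :=
  stmt_3_general T0 S hSdom hSform R hRsa hRsq W hW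
end

section
/- Let A, D be densely defined closed operators in Hilbert spaces H₁, H₂ respectively, C : dom(A) → H₂ a closable operator with dom(A) ⊆ dom(C), and ρ(A) ≠ ∅. Consider the closure 𝒜 of the lower-triangular operator matrix with entries A, 0, C, D in H₁ ⊕ H₂. If λ ∈ ρ(A), then λ belongs to the essential spectrum σ_{e2}(𝒜) (existence of a singular Weyl sequence) if and only if λ ∈ σ_{e2}(D̄). -/
/-!
For `λ ∈ ρ(A)`, a Weyl sequence `(uₙ, vₙ)` of `𝒜` at `λ` has `(A − λ)uₙ → 0`, so the bounded
resolvent gives `uₙ → 0` and `Auₙ → 0`. By the closed graph theorem `C` is `A`-bounded, hence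
`Cuₙ → 0` and `(D̄ − λ)vₙ → 0`; as the norm of `H₁ × H₂` is the max norm, `‖vₙ‖ = 1` eventually,
so a tail of `(vₙ)` is a Weyl sequence of `D̄`. Conversely `(0, vₙ)` is a Weyl sequence of `𝒜`
whenever `(vₙ)` is one of `D̄`.
-/

open Filter
open scoped InnerProductSpace

/-- The essential spectrum `σ_{e2}` of a partially defined operator: `λ` belongs to it iff there
is a singular (Weyl) sequence, i.e. unit vectors of the domain converging weakly to `0` with
`‖(T − λ)xₙ‖ → 0`. -/
def sigmaE2 {E : Type*} [NormedAddCommGroup E] [NormedSpace ℂ E] (T : E →ₗ.[ℂ] E) : Set ℂ :=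
  {l | ∃ x : ℕ → T.domain, (∀ n, ‖(x n : E)‖ = 1) ∧
    (∀ φ : E →L[ℂ] ℂ, Tendsto (fun n => φ (x n)) atTop (nhds 0)) ∧
    Tendsto (fun n => ‖T (x n) - l • ((x n : E))‖) atTop (nhds 0)}

/-- `λ` belongs to the resolvent set of the partially defined operator `T`:
`T − λ` has a bounded everywhere-defined two-sided inverse. -/
def inResolvent {E : Type*} [NormedAddCommGroup E] [NormedSpace ℂ E]
    (T : E →ₗ.[ℂ] E) (l : ℂ) : Prop :=
  ∃ R : E →L[ℂ] E, (∀ y : E, ∃ h : R y ∈ T.domain, T ⟨R y, h⟩ - l • R y = y) ∧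
    (∀ x : T.domain, R (T x - l • (x : E)) = (x : E))

open Topology

namespace LinearPMap

variable {𝕜 E F G : Type*} [NontriviallyNormedField 𝕜]
  [NormedAddCommGroup E] [NormedSpace 𝕜 E] [CompleteSpace E]
  [NormedAddCommGroup F] [NormedSpace 𝕜 F] [CompleteSpace F]
  [NormedAddCommGroup G] [NormedSpace 𝕜 G] [CompleteSpace G]

theorem IsClosable.tendsto_zero_of_graph_tendsto_zero {A : E →ₗ.[𝕜] F} {C : E →ₗ.[𝕜] G}
    (hC : C.IsClosable) (hA : _root_.IsClosed (A.graph : Set (E × F))) (hAC : A.domain ≤ C.domain)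
    {u : ℕ → A.domain} (hu : Tendsto (fun n => (u n : E)) atTop (𝓝 0))
    (hAu : Tendsto (fun n => A (u n)) atTop (𝓝 0)) :
    Tendsto (fun n => C ⟨u n, hAC (u n).2⟩) atTop (𝓝 0) := by
  have : CompleteSpace A.graph := hA.completeSpace_coe
  have hdom (g : A.graph) : (g : E × F).1 ∈ C.domain :=
    hAC (mem_domain_of_mem_graph (y := (g : E × F).2) g.2)
  let Φ : A.graph →ₗ[𝕜] G :=
    { toFun := fun g => C ⟨(g : E × F).1, hdom g⟩
      map_add' := fun g g' => by rw [← C.map_add]; rfl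
      map_smul' := fun c g => by rw [← C.map_smul]; rfl }
  have hΦ : Continuous Φ := by
    refine Φ.continuous_of_seq_closed_graph fun g x y hg hΦg => ?_
    have hlim : ((x : E × F).1, y) ∈ C.closure.graph := by
      rw [← hC.graph_closure_eq_closure_graph, ← SetLike.mem_coe,
        Submodule.topologicalClosure_coe]
      refine mem_closure_of_tendsto (((continuous_fst.comp continuous_subtype_val).tendsto x).comp
        hg |>.prodMk_nhds hΦg) (Eventually.of_forall fun n => C.mem_graph ⟨_, hdom (g n)⟩)
    rw [(image_iff (C.le_closure.1 (hdom x))).mpr hlim]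
    exact (C.le_closure.2 rfl).symm
  have hgraph : Tendsto (fun n => (⟨(u n, A (u n)), A.mem_graph (u n)⟩ : A.graph)) atTop (𝓝 0) :=
    tendsto_subtype_rng.mpr (hu.prodMk_nhds hAu)
  rw [← _root_.map_zero Φ]
  exact (hΦ.tendsto 0).comp hgraph

end LinearPMap

theorem Prod.norm_snd_eq_of_norm_fst_lt {E F : Type*} [SeminormedAddCommGroup E]
    [SeminormedAddCommGroup F] {p : E × F} {r : ℝ} (hp : ‖p‖ = r) (h : ‖p.1‖ < r) :
    ‖p.2‖ = r := by
  rw [Prod.norm_def] at hp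
  rcases max_choice ‖p.1‖ ‖p.2‖ with h' | h' <;> rw [h'] at hp
  · exact absurd hp h.ne
  · exact hp

section WeylSequence

variable {E : Type*} [NormedAddCommGroup E] [NormedSpace ℂ E] {T : E →ₗ.[ℂ] E} {l : ℂ}

theorem inResolvent.tendsto_zero (hl : inResolvent T l) {u : ℕ → T.domain}
    (hu : Tendsto (fun n => T (u n) - l • (u n : E)) atTop (𝓝 0)) :
    Tendsto (fun n => (u n : E)) atTop (𝓝 0) ∧ Tendsto (fun n => T (u n)) atTop (𝓝 0) := by
  obtain ⟨R, -, hR⟩ := hl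
  have hu0 : Tendsto (fun n => (u n : E)) atTop (𝓝 0) := by
    simpa only [Function.comp_def, hR, map_zero] using (R.continuous.tendsto 0).comp hu
  refine ⟨hu0, ?_⟩
  simpa using hu.add (hu0.const_smul l)

theorem mem_sigmaE2_of_eventually (x : ℕ → T.domain) (hnorm : ∀ᶠ n in atTop, ‖(x n : E)‖ = 1)
    (hweak : ∀ φ : E →L[ℂ] ℂ, Tendsto (fun n => φ (x n)) atTop (𝓝 0))
    (hres : Tendsto (fun n => ‖T (x n) - l • (x n : E)‖) atTop (𝓝 0)) : l ∈ sigmaE2 T := by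
  obtain ⟨N, hN⟩ := eventually_atTop.mp hnorm
  exact ⟨fun n => x (n + N), fun n => hN _ (Nat.le_add_left N n),
    fun φ => (hweak φ).comp (tendsto_add_atTop_nat N), hres.comp (tendsto_add_atTop_nat N)⟩

end WeylSequence

section LowerTriangular

variable {H₁ H₂ : Type*} [NormedAddCommGroup H₁] [NormedSpace ℂ H₁]
  [NormedAddCommGroup H₂] [NormedSpace ℂ H₂]
  {A : H₁ →ₗ.[ℂ] H₁} {D : H₂ →ₗ.[ℂ] H₂} {C : H₁ →ₗ.[ℂ] H₂} {hCdom : A.domain ≤ C.domain}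
  {𝒜 : (H₁ × H₂) →ₗ.[ℂ] (H₁ × H₂)}
  (h𝒜dom : ∀ p : H₁ × H₂, p ∈ 𝒜.domain ↔ p.1 ∈ A.domain ∧ p.2 ∈ D.domain)
  (h𝒜act : ∀ (p : 𝒜.domain) (h1 : (p : H₁ × H₂).1 ∈ A.domain) (h2 : (p : H₁ × H₂).2 ∈ D.domain),
    𝒜 p = (A ⟨(p : H₁ × H₂).1, h1⟩, C ⟨(p : H₁ × H₂).1, hCdom h1⟩ + D ⟨(p : H₁ × H₂).2, h2⟩))
include h𝒜dom h𝒜act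

theorem sigmaE2_subset_of_lowerTriangular : sigmaE2 D ⊆ sigmaE2 𝒜 := by
  rintro l ⟨y, hy1, hweak, hres⟩
  have hmem (n : ℕ) : ((0 : H₁), (y n : H₂)) ∈ 𝒜.domain :=
    (h𝒜dom _).mpr ⟨A.domain.zero_mem, (y n).2⟩
  have happly (n : ℕ) : 𝒜 ⟨_, hmem n⟩ = (0, D (y n)) := by
    rw [h𝒜act _ A.domain.zero_mem (y n).2, Prod.mk.injEq]
    exact ⟨A.map_zero, by rw [show C ⟨0, _⟩ = 0 from C.map_zero, zero_add]⟩
  refine ⟨fun n => ⟨_, hmem n⟩, fun n => by simp [Prod.norm_def, hy1 n],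
    fun φ => hweak (φ.comp (.inr ℂ H₁ H₂)), ?_⟩
  simpa [happly, Prod.norm_def] using hres

theorem mem_sigmaE2_of_mem_sigmaE2_lowerTriangular [CompleteSpace H₁] [CompleteSpace H₂]
    (hA : IsClosed (A.graph : Set (H₁ × H₁))) (hC : C.IsClosable) {l : ℂ}
    (hl : inResolvent A l) (h : l ∈ sigmaE2 𝒜) : l ∈ sigmaE2 D := by
  obtain ⟨p, hp1, hweak, hres⟩ := h
  have hdom (n : ℕ) := (h𝒜dom _).mp (p n).2
  let u : ℕ → A.domain := fun n => ⟨_, (hdom n).1⟩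
  let v : ℕ → D.domain := fun n => ⟨_, (hdom n).2⟩
  have hresid (n : ℕ) : 𝒜 (p n) - l • (p n : H₁ × H₂) =
      (A (u n) - l • (u n : H₁), C ⟨u n, hCdom (u n).2⟩ + (D (v n) - l • (v n : H₂))) := by
    rw [h𝒜act (p n) (hdom n).1 (hdom n).2, Prod.ext_iff]
    refine ⟨rfl, ?_⟩
    simp only [Prod.snd_sub, Prod.smul_snd]
    abel
  have hres' := tendsto_zero_iff_norm_tendsto_zero.mpr hres
  obtain ⟨hu, hAu⟩ := hl.tendsto_zero <| by
    simpa [Function.comp_def, hresid] using (continuous_fst.tendsto 0).comp hres'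
  have hCu := hC.tendsto_zero_of_graph_tendsto_zero hA hCdom hu hAu
  have hDres : Tendsto (fun n => D (v n) - l • (v n : H₂)) atTop (𝓝 0) := by
    simpa [Function.comp_def, hresid] using ((continuous_snd.tendsto 0).comp hres').sub hCu
  refine mem_sigmaE2_of_eventually v ?_ (fun φ => hweak (φ.comp (.snd ℂ H₁ H₂)))
    (tendsto_zero_iff_norm_tendsto_zero.mp hDres)
  filter_upwards [(tendsto_zero_iff_norm_tendsto_zero.mp hu).eventually (gt_mem_nhds one_pos)]
    with n hn
  exact Prod.norm_snd_eq_of_norm_fst_lt (hp1 n) hn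

end LowerTriangular

theorem stmt_6_general {H₁ H₂ : Type*}
    [NormedAddCommGroup H₁] [InnerProductSpace ℂ H₁] [CompleteSpace H₁]
    [NormedAddCommGroup H₂] [InnerProductSpace ℂ H₂] [CompleteSpace H₂]
    (A : H₁ →ₗ.[ℂ] H₁) (D : H₂ →ₗ.[ℂ] H₂) (C : H₁ →ₗ.[ℂ] H₂)
    (hAclosed : IsClosed (A.graph : Set (H₁ × H₁)))
    (hCclosable : C.IsClosable) (hCdom : A.domain ≤ C.domain)
    (𝒜 : (H₁ × H₂) →ₗ.[ℂ] (H₁ × H₂))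
    (h𝒜dom : ∀ p : H₁ × H₂, p ∈ 𝒜.domain ↔ p.1 ∈ A.domain ∧ p.2 ∈ D.closure.domain)
    (h𝒜act : ∀ (p : 𝒜.domain) (h1 : (p : H₁ × H₂).1 ∈ A.domain)
      (h2 : (p : H₁ × H₂).2 ∈ D.closure.domain),
      𝒜 p = (A ⟨(p : H₁ × H₂).1, h1⟩,
        C ⟨(p : H₁ × H₂).1, hCdom h1⟩ + D.closure ⟨(p : H₁ × H₂).2, h2⟩))
    (l : ℂ) (hl : inResolvent A l) :
    l ∈ sigmaE2 𝒜 ↔ l ∈ sigmaE2 D.closure :=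
  ⟨mem_sigmaE2_of_mem_sigmaE2_lowerTriangular h𝒜dom h𝒜act hAclosed hCclosable hl,
    fun h => sigmaE2_subset_of_lowerTriangular h𝒜dom h𝒜act h⟩

/-- Let `A`, `D` be densely defined closed/closable operators in Hilbert spaces
`H₁`, `H₂`, `C` closable with `dom A ⊆ dom C`, and let `𝒜` be the closure of the lower
triangular operator matrix `[[A, 0], [C, D]]`, i.e. the operator
`(x, y) ↦ (Ax, Cx + D̄y)` on `dom A ⊕ dom D̄`.  If `λ ∈ ρ(A)`, then
`λ ∈ σ_{e2}(𝒜) ↔ λ ∈ σ_{e2}(D̄)`. -/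
theorem stmt_6 {H₁ H₂ : Type*}
    [NormedAddCommGroup H₁] [InnerProductSpace ℂ H₁] [CompleteSpace H₁]
    [NormedAddCommGroup H₂] [InnerProductSpace ℂ H₂] [CompleteSpace H₂]
    (A : H₁ →ₗ.[ℂ] H₁) (D : H₂ →ₗ.[ℂ] H₂) (C : H₁ →ₗ.[ℂ] H₂)
    (hAdense : Dense (A.domain : Set H₁)) (hAclosed : IsClosed (A.graph : Set (H₁ × H₁)))
    (hDdense : Dense (D.domain : Set H₂)) (hDclosable : D.IsClosable)
    (hCclosable : C.IsClosable) (hCdom : A.domain ≤ C.domain)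
    (𝒜 : (H₁ × H₂) →ₗ.[ℂ] (H₁ × H₂))
    (h𝒜dom : ∀ p : H₁ × H₂, p ∈ 𝒜.domain ↔ p.1 ∈ A.domain ∧ p.2 ∈ D.closure.domain)
    (h𝒜act : ∀ (p : 𝒜.domain) (h1 : (p : H₁ × H₂).1 ∈ A.domain)
      (h2 : (p : H₁ × H₂).2 ∈ D.closure.domain),
      𝒜 p = (A ⟨(p : H₁ × H₂).1, h1⟩,
        C ⟨(p : H₁ × H₂).1, hCdom h1⟩ + D.closure ⟨(p : H₁ × H₂).2, h2⟩))
    (l : ℂ) (hl : inResolvent A l) :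
    l ∈ sigmaE2 𝒜 ↔ l ∈ sigmaE2 D.closure :=
  stmt_6_general A D C hAclosed hCclosable hCdom 𝒜 h𝒜dom h𝒜act l hl
end

section
/- Let D ∈ B(ℓ²(ℕ)) be given by De_k = e_{2k}, P the orthogonal projection onto (ran D)^⊥ = ker D*, A = I − P, and C = P. Then 0 ∉ σ_{e2}([[A,0],[C,D]]) although 0 ∈ σ_{e2}(A) ∩ σ*_{e2}(D). In other words, the inclusion σ_{e2}(triangular matrix) ⊆ σ_{e2}(A) ∪ σ_{e2}(D) can be strict. -/
open Filter
open scoped InnerProductSpace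

noncomputable section

/-- The essential spectrum `σ_{e2}` of a bounded operator: `λ` belongs to it iff there is a
singular (Weyl) sequence of unit vectors converging weakly to `0` with `‖(T − λ)xₙ‖ → 0`. -/
def sigmaE2B {E : Type*} [NormedAddCommGroup E] [NormedSpace ℂ E] (T : E →L[ℂ] E) : Set ℂ :=
  {l | ∃ x : ℕ → E, (∀ n, ‖x n‖ = 1) ∧
    (∀ φ : E →L[ℂ] ℂ, Tendsto (fun n => φ (x n)) atTop (nhds 0)) ∧
    Tendsto (fun n => ‖T (x n) - l • x n‖) atTop (nhds 0)}

/-- `σ*_{e2}`: the set of `λ` such that `ran(T − λ)` fails to be closed with finite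
codimension. -/
def sigmaE2StarB {E : Type*} [NormedAddCommGroup E] [NormedSpace ℂ E] (T : E →L[ℂ] E) : Set ℂ :=
  {l | ¬ (IsClosed ((LinearMap.range ((T - l • (1 : E →L[ℂ] E) : E →L[ℂ] E) : E →ₗ[ℂ] E) : Submodule ℂ E) : Set E) ∧
    FiniteDimensional ℂ (E ⧸ LinearMap.range ((T - l • (1 : E →L[ℂ] E) : E →L[ℂ] E) : E →ₗ[ℂ] E)))}

/-- The lower triangular operator matrix `[[A, 0], [C, D]]` on `E ⊕ E`. -/
def triMatrix {E : Type*} [NormedAddCommGroup E] [NormedSpace ℂ E] (A C D : E →L[ℂ] E) :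
    (E × E) →L[ℂ] (E × E) :=
  (A.comp (ContinuousLinearMap.fst ℂ E E)).prod
    ((C.comp (ContinuousLinearMap.fst ℂ E E)) + (D.comp (ContinuousLinearMap.snd ℂ E E)))


/-! The odd basis vectors `e_{2k+1}` form an orthonormal, hence weakly null, sequence in
`(ran D)ᗮ = ran P`: they are killed by `I - P` and stay independent modulo `ran D`. On the other
hand `D` is an isometry and `ran P ⊥ ran D`, so Pythagoras gives
`‖(x, y)‖ ≤ 2 ‖[[I - P, 0], [P, D]] (x, y)‖`, and an operator bounded below has no singular
sequence at `0`. -/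

open Topology
open scoped lp

section EssentialSpectrum

variable {E : Type*}

theorem zero_notMem_sigmaE2B_of_norm_le_mul [NormedAddCommGroup E] [NormedSpace ℂ E]
    (T : E →L[ℂ] E) (C : ℝ) (hT : ∀ x, ‖x‖ ≤ C * ‖T x‖) : (0 : ℂ) ∉ sigmaE2B T := by
  rintro ⟨x, hx_norm, -, hTx⟩
  simp only [zero_smul, sub_zero] at hTx
  have h_lim : Tendsto (fun n => C * ‖T (x n)‖) atTop (𝓝 0) := by
    simpa using hTx.const_mul C
  have h_one : ∀ n, 1 ≤ C * ‖T (x n)‖ := fun n => hx_norm n ▸ hT (x n)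
  linarith [ge_of_tendsto' h_lim h_one]

variable [NormedAddCommGroup E]

theorem Orthonormal.tendsto_apply_atTop_zero {𝕜 : Type*} [RCLike 𝕜] [InnerProductSpace 𝕜 E]
    [CompleteSpace E] {v : ℕ → E} (hv : Orthonormal 𝕜 v) (φ : StrongDual 𝕜 E) :
    Tendsto (fun n => φ (v n)) atTop (𝓝 0) := by
  set y := (InnerProductSpace.toDual 𝕜 E).symm φ
  have h_norm : ∀ n, ‖φ (v n)‖ = ‖⟪v n, y⟫_𝕜‖ := fun n => by
    rw [← InnerProductSpace.toDual_symm_apply, ← inner_conj_symm, RCLike.norm_conj]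
  have h_sq := (hv.inner_products_summable (x := y)).tendsto_atTop_zero.sqrt
  simp only [Real.sqrt_sq (norm_nonneg _), Real.sqrt_zero, ← h_norm] at h_sq
  exact tendsto_zero_iff_norm_tendsto_zero.2 h_sq

theorem not_finiteDimensional_quotient_of_orthonormal {𝕜 : Type*} [RCLike 𝕜]
    [InnerProductSpace 𝕜 E] {ι : Type*} [Infinite ι] {v : ι → E} (hv : Orthonormal 𝕜 v)
    {K : Submodule 𝕜 E} (hvK : ∀ i, v i ∈ Kᗮ) : ¬ FiniteDimensional 𝕜 (E ⧸ K) := by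
  intro h_fin
  have h_disj : Disjoint (Submodule.span 𝕜 (Set.range v)) (LinearMap.ker K.mkQ) := by
    rw [Submodule.ker_mkQ]
    exact K.orthogonal_disjoint.symm.mono_left (Submodule.span_le.2 (Set.range_subset_iff.2 hvK))
  have := (hv.linearIndependent.map h_disj).finite
  exact not_finite ι

theorem norm_le_norm_add_of_inner_eq_zero {𝕜 : Type*} [RCLike 𝕜] [InnerProductSpace 𝕜 E]
    {x y : E} (h : ⟪x, y⟫_𝕜 = 0) : ‖x‖ ≤ ‖x + y‖ := by
  have := norm_add_sq_eq_norm_sq_add_norm_sq_of_inner_eq_zero x y h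
  nlinarith [norm_nonneg x, norm_nonneg y, norm_nonneg (x + y)]

variable [InnerProductSpace ℂ E]

theorem zero_mem_sigmaE2B_of_orthonormal [CompleteSpace E] (T : E →L[ℂ] E) {v : ℕ → E}
    (hv : Orthonormal ℂ v) (hTv : ∀ n, T (v n) = 0) : (0 : ℂ) ∈ sigmaE2B T :=
  ⟨v, hv.1, hv.tendsto_apply_atTop_zero, by simp [hTv]⟩

theorem zero_mem_sigmaE2StarB_of_orthonormal (T : E →L[ℂ] E) {ι : Type*} [Infinite ι]
    {v : ι → E} (hv : Orthonormal ℂ v) (hvT : ∀ i, v i ∈ (LinearMap.range (T : E →ₗ[ℂ] E))ᗮ) :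
    (0 : ℂ) ∈ sigmaE2StarB T := by
  rw [sigmaE2StarB, Set.mem_ofPred_eq, zero_smul, sub_zero]
  exact fun h => not_finiteDimensional_quotient_of_orthonormal hv hvT h.2

theorem norm_le_two_mul_norm_triMatrix {P D : E →L[ℂ] E} (hPD : ∀ x y, ⟪P x, D y⟫_ℂ = 0)
    (hD : ∀ y, ‖D y‖ = ‖y‖) (z : E × E) : ‖z‖ ≤ 2 * ‖triMatrix (1 - P) P D z‖ := by
  obtain ⟨x, y⟩ := z
  have h_apply : triMatrix (1 - P) P D (x, y) = (x - P x, P x + D y) := by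
    simp [triMatrix]
  have hPx : ‖P x‖ ≤ ‖P x + D y‖ := norm_le_norm_add_of_inner_eq_zero (hPD x y)
  have hDy : ‖D y‖ ≤ ‖P x + D y‖ := by
    rw [add_comm]
    exact norm_le_norm_add_of_inner_eq_zero (inner_eq_zero_symm.1 (hPD x y))
  have hx : ‖x‖ ≤ ‖x - P x‖ + ‖P x‖ := by
    simpa using norm_add_le (x - P x) (P x)
  rw [h_apply, Prod.norm_mk, Prod.norm_mk]
  have h_fst := le_max_left ‖x - P x‖ ‖P x + D y‖
  have h_snd := le_max_right ‖x - P x‖ ‖P x + D y‖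
  refine max_le ?_ ?_ <;> linarith [hD y, norm_nonneg (P x + D y)]

end EssentialSpectrum

theorem lp.orthonormal_single {𝕜 ι : Type*} [RCLike 𝕜] [DecidableEq ι] :
    Orthonormal 𝕜 (fun i : ι => lp.single 2 i (1 : 𝕜)) := by
  rw [orthonormal_iff_ite]
  intro i j
  rw [lp.inner_single_left, lp.single_apply, Pi.single_apply]
  split_ifs <;> simp

namespace DoublingMap

variable {D : ℓ²(ℕ, ℂ) →L[ℂ] ℓ²(ℕ, ℂ)}
  (hD : ∀ k : ℕ, D (lp.single 2 k (1 : ℂ)) = lp.single 2 (2 * k) (1 : ℂ))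
include hD

theorem adjoint_apply_apply (x : ℓ²(ℕ, ℂ)) (i : ℕ) :
    D.adjoint x i = x (2 * i) := by
  calc D.adjoint x i = ⟪lp.single 2 i (1 : ℂ), D.adjoint x⟫_ℂ := by simp [lp.inner_single_left]
    _ = ⟪lp.single 2 (2 * i) (1 : ℂ), x⟫_ℂ := by rw [ContinuousLinearMap.adjoint_inner_right, hD]
    _ = x (2 * i) := by simp [lp.inner_single_left]

theorem norm_map (y : ℓ²(ℕ, ℂ)) : ‖D y‖ = ‖y‖ := by
  refine (ContinuousLinearMap.norm_map_iff_adjoint_comp_self D).2 ?_ y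
  refine lp.ext_continuousLinearMap ENNReal.ofNat_ne_top fun k => ?_
  ext j
  simp [adjoint_apply_apply hD, hD, lp.single_apply, Pi.single_apply]

theorem single_odd_mem_orthogonal_range (k : ℕ) :
    lp.single 2 (2 * k + 1) (1 : ℂ) ∈ (LinearMap.range (D : ℓ²(ℕ, ℂ) →ₗ[ℂ] ℓ²(ℕ, ℂ)))ᗮ := by
  rw [Submodule.mem_orthogonal]
  rintro _ ⟨x, rfl⟩
  have h_adj : D.adjoint (lp.single 2 (2 * k + 1) (1 : ℂ)) = 0 := by
    ext i
    have h_ne : 2 * i ≠ 2 * k + 1 := by omega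
    simp [adjoint_apply_apply hD, lp.single_apply, h_ne]
  rw [ContinuousLinearMap.coe_coe, ← ContinuousLinearMap.adjoint_inner_right, h_adj,
    inner_zero_right]

end DoublingMap

/-- On `ℓ²(ℕ)`, let `D` be the bounded operator with `D e_k = e_{2k}`, `P` the
orthogonal projection onto `(ran D)^⊥ = ker D*`, `A = I − P` and `C = P`.  Then
`0 ∉ σ_{e2}([[A,0],[C,D]])` although `0 ∈ σ_{e2}(A) ∩ σ*_{e2}(D)`: the inclusion
`σ_{e2}(triangular matrix) ⊆ σ_{e2}(A) ∪ σ_{e2}(D)` can be strict. -/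
theorem stmt_11 (D P : lp (fun _ : ℕ => ℂ) 2 →L[ℂ] lp (fun _ : ℕ => ℂ) 2)
    (hD : ∀ k : ℕ, D (lp.single 2 k (1 : ℂ)) = lp.single 2 (2 * k) (1 : ℂ))
    (hPmem : ∀ x, P x ∈ (LinearMap.range (D : lp (fun _ : ℕ => ℂ) 2 →ₗ[ℂ] lp (fun _ : ℕ => ℂ) 2))ᗮ)
    (hPfix : ∀ x ∈ (LinearMap.range (D : lp (fun _ : ℕ => ℂ) 2 →ₗ[ℂ] lp (fun _ : ℕ => ℂ) 2))ᗮ, P x = x) :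
    (0 : ℂ) ∉ sigmaE2B (triMatrix (1 - P) P D) ∧
    (0 : ℂ) ∈ sigmaE2B (1 - P) ∧
    (0 : ℂ) ∈ sigmaE2StarB D := by
  have hPD : ∀ x y, ⟪P x, D y⟫_ℂ = 0 := fun x y =>
    (Submodule.mem_orthogonal' _ _).1 (hPmem x) _ ⟨y, rfl⟩
  set v : ℕ → ℓ²(ℕ, ℂ) := fun k => lp.single 2 (2 * k + 1) (1 : ℂ)
  have hv : Orthonormal ℂ v :=
    lp.orthonormal_single.comp _ fun i j h => by simpa using h
  have hvD : ∀ k, v k ∈ (LinearMap.range (D : ℓ²(ℕ, ℂ) →ₗ[ℂ] ℓ²(ℕ, ℂ)))ᗮ :=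
    DoublingMap.single_odd_mem_orthogonal_range hD
  refine ⟨?_, ?_, zero_mem_sigmaE2StarB_of_orthonormal D hv hvD⟩
  · exact zero_notMem_sigmaE2B_of_norm_le_mul _ 2
      (norm_le_two_mul_norm_triMatrix hPD (DoublingMap.norm_map hD))
  · refine zero_mem_sigmaE2B_of_orthonormal _ hv fun k => ?_
    simp [hPfix _ (hvD k)]
end
end

section
/- Let H₀ be a Hilbert space, H ⊆ H₀ a closed subspace with orthogonal projection P, and for n ∈ ℕ closed subspaces H_n ⊆ H₀ with projections P_n → P strongly. Let T_n(λ) = Σ_{j=0}^M λ^j A_{j,n} be polynomial operator pencils with A_{0,n} closed and A_{j,n} (j ≥ 1) bounded uniformly in n. If λ belongs to the region of boundedness Δ_b((T_n)), i.e. T_n(λ)^{−1} exist for n ≥ n₀ with sup norms bounded by m, then there is r > 0 such that the whole disk B_r(λ) lies in Δ_b((T_n)) with a uniform bound on ‖T_n(μ)^{−1}‖ for μ ∈ B_r(λ), n ≥ n₀. -/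
open Filter Topology

/-!
For `μ` near `λ` write `T(μ) = T(λ) + D` with `D = Σ_j (μ^(j+1) - λ^(j+1)) A_j` bounded.
If `R = T(λ)⁻¹`, then `T(μ) = (1 + D R) T(λ)` and `‖D R‖ ≤ (Σ_j ‖μ^(j+1) - λ^(j+1)‖ K) m`,
which is a continuous function of `μ` vanishing at `λ` and independent of `n`. On a ball where it
is `< 1/2`, the Neumann series inverts `1 + D R` with norm `≤ 2`, so `R (1 + D R)⁻¹` inverts
`T(μ)` with norm `≤ 2m` for every `n ≥ n₀`.
-/

section

variable {𝕜 E F : Type*} [NontriviallyNormedField 𝕜] [NormedAddCommGroup E] [NormedSpace 𝕜 E]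
  [NormedAddCommGroup F] [NormedSpace 𝕜 F]

theorem ContinuousLinearMap.norm_inv_oneSub_le [CompleteSpace F] (t : F →L[𝕜] F) (ht : ‖t‖ < 1) :
    ‖(↑(Units.oneSub t ht)⁻¹ : F →L[𝕜] F)‖ ≤ (1 - ‖t‖)⁻¹ := by
  have h1 : ‖(1 : F →L[𝕜] F)‖ ≤ 1 := ContinuousLinearMap.norm_id_le
  show ‖∑' n, t ^ n‖ ≤ _
  linarith [tsum_geometric_le_of_norm_lt_one t ht]

namespace LinearPMap

def HasBoundedInverse (T : E →ₗ.[𝕜] F) (R : F →L[𝕜] E) : Prop :=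
  (∀ y, ∃ h : R y ∈ T.domain, T ⟨R y, h⟩ = y) ∧ ∀ x : T.domain, R (T x) = x

variable {T : E →ₗ.[𝕜] F} {R : F →L[𝕜] E}

theorem HasBoundedInverse.vadd (hR : HasBoundedInverse T R) (D : E →L[𝕜] F) {S : F →L[𝕜] F}
    (hS : (1 + D.comp R) * S = 1) (hS' : S * (1 + D.comp R) = 1) :
    HasBoundedInverse ((D : E →ₗ[𝕜] F) +ᵥ T) (R.comp S) := by
  have hS_apply : ∀ y, S y + D (R (S y)) = y := fun y => by
    simpa using congr($hS y)
  have hS'_apply : ∀ y, S (y + D (R y)) = y := fun y => by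
    simpa using congr($hS' y)
  constructor
  · intro y
    obtain ⟨h, hTR⟩ := hR.1 (S y)
    refine ⟨h, ?_⟩
    calc ((D : E →ₗ[𝕜] F) +ᵥ T) ⟨R (S y), h⟩ = T ⟨R (S y), h⟩ + D (R (S y)) := add_comm _ _
      _ = y := by rw [hTR, hS_apply]
  · intro x
    have hsplit : ((D : E →ₗ[𝕜] F) +ᵥ T) x = T x + D (R (T x)) := by
      rw [hR.2 x]; exact add_comm _ _
    rw [ContinuousLinearMap.comp_apply, hsplit, hS'_apply, hR.2 x]

theorem HasBoundedInverse.exists_vadd [CompleteSpace F] (hR : HasBoundedInverse T R)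
    (D : E →L[𝕜] F) {q : ℝ} (hD : ‖D.comp R‖ ≤ q) (hq : q < 1) :
    ∃ R', HasBoundedInverse ((D : E →ₗ[𝕜] F) +ᵥ T) R' ∧ ‖R'‖ ≤ ‖R‖ / (1 - q) := by
  have ht : ‖-D.comp R‖ < 1 := by rw [norm_neg]; linarith
  set u := Units.oneSub (-D.comp R) ht
  have hu : (u : F →L[𝕜] F) = 1 + D.comp R := sub_neg_eq_add _ _
  refine ⟨R.comp (↑u⁻¹ : F →L[𝕜] F), hR.vadd D (hu ▸ u.mul_inv) (hu ▸ u.inv_mul), ?_⟩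
  calc ‖R.comp (↑u⁻¹ : F →L[𝕜] F)‖ ≤ ‖R‖ * ‖(↑u⁻¹ : F →L[𝕜] F)‖ := R.opNorm_comp_le _
    _ ≤ ‖R‖ * (1 - q)⁻¹ := by
        gcongr
        refine (ContinuousLinearMap.norm_inv_oneSub_le _ ht).trans ?_
        rw [norm_neg]
        gcongr
    _ = ‖R‖ / (1 - q) := (div_eq_mul_inv _ _).symm

end LinearPMap

section Pencil

open LinearPMap

variable {M : ℕ}

/-- `Σ_{j=1}^M μ^j A_j` in the paper's indexing: here `A j` is the coefficient of `μ ^ (j + 1)`. -/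
def pencilTail (A : Fin M → E →L[𝕜] F) (μ : 𝕜) : E →L[𝕜] F :=
  ∑ j : Fin M, μ ^ ((j : ℕ) + 1) • A j

def pencil (A0 : E →ₗ.[𝕜] F) (A : Fin M → E →L[𝕜] F) (μ : 𝕜) : E →ₗ.[𝕜] F :=
  (pencilTail A μ : E →ₗ[𝕜] F) +ᵥ A0

theorem pencilTail_apply (A : Fin M → E →L[𝕜] F) (μ : 𝕜) (x : E) :
    pencilTail A μ x = ∑ j : Fin M, μ ^ ((j : ℕ) + 1) • A j x := by
  simp [pencilTail]

theorem hasBoundedInverse_pencil_iff (A0 : E →ₗ.[𝕜] F) (A : Fin M → E →L[𝕜] F) (μ : 𝕜)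
    (R : F →L[𝕜] E) :
    HasBoundedInverse (pencil A0 A μ) R ↔
      (∀ y, ∃ h : R y ∈ A0.domain,
        A0 ⟨R y, h⟩ + ∑ j : Fin M, μ ^ ((j : ℕ) + 1) • A j (R y) = y) ∧
      ∀ x : A0.domain, R (A0 x + ∑ j : Fin M, μ ^ ((j : ℕ) + 1) • A j (x : E)) = x := by
  simp only [HasBoundedInverse, pencil, vadd_apply, ← pencilTail_apply, add_comm]
  rfl

theorem norm_pencilTail_sub_le (A : Fin M → E →L[𝕜] F) {K : ℝ} (hK : ∀ j, ‖A j‖ ≤ K)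
    (μ l : 𝕜) :
    ‖pencilTail A μ - pencilTail A l‖ ≤
      ∑ j : Fin M, ‖μ ^ ((j : ℕ) + 1) - l ^ ((j : ℕ) + 1)‖ * K := by
  rw [pencilTail, pencilTail, ← Finset.sum_sub_distrib]
  refine (norm_sum_le _ _).trans (Finset.sum_le_sum fun j _ => ?_)
  rw [← sub_smul, norm_smul]
  exact mul_le_mul_of_nonneg_left (hK j) (norm_nonneg _)

theorem LinearPMap.HasBoundedInverse.exists_pencil [CompleteSpace F] {A0 : E →ₗ.[𝕜] F}
    {A : Fin M → E →L[𝕜] F} {l : 𝕜} {R : F →L[𝕜] E} (hR : HasBoundedInverse (pencil A0 A l) R)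
    (μ : 𝕜) {q : ℝ} (hD : ‖(pencilTail A μ - pencilTail A l).comp R‖ ≤ q) (hq : q < 1) :
    ∃ R', HasBoundedInverse (pencil A0 A μ) R' ∧ ‖R'‖ ≤ ‖R‖ / (1 - q) := by
  have hsplit : pencil A0 A μ =
      ((pencilTail A μ - pencilTail A l : E →L[𝕜] F) : E →ₗ[𝕜] F) +ᵥ pencil A0 A l := by
    rw [pencil, pencil, ← add_vadd, ← ContinuousLinearMap.toLinearMap_add, sub_add_cancel]
  rw [hsplit]
  exact hR.exists_vadd _ hD hq

end Pencil

end

theorem stmt_12_general (M : ℕ) (Hn : ℕ → Type*)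
    [∀ n, NormedAddCommGroup (Hn n)] [∀ n, InnerProductSpace ℂ (Hn n)]
    [∀ n, CompleteSpace (Hn n)]
    (A0 : ∀ n, Hn n →ₗ.[ℂ] Hn n)
    (A : ∀ n, Fin M → (Hn n →L[ℂ] Hn n))
    (K : ℝ) (hK : ∀ n j, ‖A n j‖ ≤ K)
    (l : ℂ) (n₀ : ℕ) (m : ℝ)
    (hres : ∀ n ≥ n₀, ∃ R : Hn n →L[ℂ] Hn n, ‖R‖ ≤ m ∧
      (∀ y : Hn n, ∃ h : R y ∈ (A0 n).domain,
        (A0 n) ⟨R y, h⟩ + ∑ j : Fin M, l ^ ((j : ℕ) + 1) • A n j (R y) = y) ∧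
      (∀ x : (A0 n).domain,
        R ((A0 n) x + ∑ j : Fin M, l ^ ((j : ℕ) + 1) • A n j (x : Hn n)) = (x : Hn n))) :
    ∃ r > (0 : ℝ), ∃ m' : ℝ, ∀ μ ∈ Metric.ball l r, ∀ n ≥ n₀,
      ∃ R : Hn n →L[ℂ] Hn n, ‖R‖ ≤ m' ∧
        (∀ y : Hn n, ∃ h : R y ∈ (A0 n).domain,
          (A0 n) ⟨R y, h⟩ + ∑ j : Fin M, μ ^ ((j : ℕ) + 1) • A n j (R y) = y) ∧
        (∀ x : (A0 n).domain,
          R ((A0 n) x + ∑ j : Fin M, μ ^ ((j : ℕ) + 1) • A n j (x : Hn n)) = (x : Hn n)) := by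
  set bound : ℂ → ℝ := fun μ => (∑ j : Fin M, ‖μ ^ ((j : ℕ) + 1) - l ^ ((j : ℕ) + 1)‖ * K) * m
  have hbound : Tendsto bound (𝓝 l) (𝓝 0) := by
    have : Continuous bound := by fun_prop
    simpa [bound] using this.tendsto l
  obtain ⟨r, hr, hball⟩ := Metric.eventually_nhds_iff_ball.mp
    (hbound.eventually_lt_const (by norm_num : (0 : ℝ) < 1 / 2))
  refine ⟨r, hr, 2 * m, fun μ hμ n hn => ?_⟩
  obtain ⟨R, hRm, hR⟩ := hres n hn
  rw [← hasBoundedInverse_pencil_iff] at hR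
  have hD : ‖(pencilTail (A n) μ - pencilTail (A n) l).comp R‖ ≤ 1 / 2 := calc
    _ ≤ ‖pencilTail (A n) μ - pencilTail (A n) l‖ * ‖R‖ := ContinuousLinearMap.opNorm_comp_le _ _
    _ ≤ bound μ := mul_le_mul (norm_pencilTail_sub_le _ (hK n) μ l) hRm (norm_nonneg _)
        ((norm_nonneg _).trans (norm_pencilTail_sub_le _ (hK n) μ l))
    _ ≤ 1 / 2 := (hball μ hμ).le
  obtain ⟨R', hR', hR'm⟩ := hR.exists_pencil μ hD (by norm_num)
  refine ⟨R', ?_, (hasBoundedInverse_pencil_iff _ _ _ _).mp hR'⟩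
  calc ‖R'‖ ≤ ‖R‖ / (1 - 1 / 2) := hR'm
    _ ≤ 2 * m := by norm_num; linarith

/-- Consider polynomial operator pencils
`Tₙ(λ) = A_{0,n} + Σ_{j=1}^M λ^j A_{j,n}` in Hilbert spaces `Hₙ`, with `A_{0,n}` closed and
densely defined and the higher-order coefficients bounded uniformly in `n`.  If `λ` belongs to
the region of boundedness, i.e. `Tₙ(λ)` is boundedly invertible for `n ≥ n₀` with
`‖Tₙ(λ)⁻¹‖ ≤ m`, then there are `r > 0` and `m'` such that, for every `μ` in the disk
`B_r(λ)` and every `n ≥ n₀`, `Tₙ(μ)` is boundedly invertible with `‖Tₙ(μ)⁻¹‖ ≤ m'`. -/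
theorem stmt_12 (M : ℕ) (Hn : ℕ → Type*)
    [∀ n, NormedAddCommGroup (Hn n)] [∀ n, InnerProductSpace ℂ (Hn n)]
    [∀ n, CompleteSpace (Hn n)]
    (A0 : ∀ n, Hn n →ₗ.[ℂ] Hn n)
    (hA0closed : ∀ n, IsClosed ((A0 n).graph : Set (Hn n × Hn n)))
    (hA0dense : ∀ n, Dense ((A0 n).domain : Set (Hn n)))
    (A : ∀ n, Fin M → (Hn n →L[ℂ] Hn n))
    (K : ℝ) (hK : ∀ n j, ‖A n j‖ ≤ K)
    (l : ℂ) (n₀ : ℕ) (m : ℝ)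
    (hres : ∀ n ≥ n₀, ∃ R : Hn n →L[ℂ] Hn n, ‖R‖ ≤ m ∧
      (∀ y : Hn n, ∃ h : R y ∈ (A0 n).domain,
        (A0 n) ⟨R y, h⟩ + ∑ j : Fin M, l ^ ((j : ℕ) + 1) • A n j (R y) = y) ∧
      (∀ x : (A0 n).domain,
        R ((A0 n) x + ∑ j : Fin M, l ^ ((j : ℕ) + 1) • A n j (x : Hn n)) = (x : Hn n))) :
    ∃ r > (0 : ℝ), ∃ m' : ℝ, ∀ μ ∈ Metric.ball l r, ∀ n ≥ n₀,
      ∃ R : Hn n →L[ℂ] Hn n, ‖R‖ ≤ m' ∧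
        (∀ y : Hn n, ∃ h : R y ∈ (A0 n).domain,
          (A0 n) ⟨R y, h⟩ + ∑ j : Fin M, μ ^ ((j : ℕ) + 1) • A n j (R y) = y) ∧
        (∀ x : (A0 n).domain,
          R ((A0 n) x + ∑ j : Fin M, μ ^ ((j : ℕ) + 1) • A n j (x : Hn n)) = (x : Hn n)) :=
  stmt_12_general M Hn A0 A K hK l n₀ m hres
end

section
/- With the setup of polynomial pencils T_n, if λ ∈ Δ_b((T_n)_{n∈ℕ}) (the region of boundedness), then λ is not a point of spectral pollution: no sequence λ_n ∈ σ(T_n) can converge to λ. -/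
open Filter

/-- For polynomial operator pencils
`Tₙ(λ) = A_{0,n} + Σ_{j=1}^M λ^j A_{j,n}` with uniformly bounded higher coefficients, if `λ`
belongs to the region of boundedness `Δ_b((Tₙ))` — that is, `Tₙ(λ)` is boundedly invertible for
`n ≥ n₀` with a uniform bound on the inverses — then `λ` is not a point of spectral pollution:
no sequence `λₙ ∈ σ(Tₙ)` can converge to `λ`. -/
theorem stmt_13 (M : ℕ) (Hn : ℕ → Type*)
    [∀ n, NormedAddCommGroup (Hn n)] [∀ n, InnerProductSpace ℂ (Hn n)]
    [∀ n, CompleteSpace (Hn n)]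
    (A0 : ∀ n, Hn n →ₗ.[ℂ] Hn n)
    (hA0closed : ∀ n, IsClosed ((A0 n).graph : Set (Hn n × Hn n)))
    (hA0dense : ∀ n, Dense ((A0 n).domain : Set (Hn n)))
    (A : ∀ n, Fin M → (Hn n →L[ℂ] Hn n))
    (K : ℝ) (hK : ∀ n j, ‖A n j‖ ≤ K)
    (l : ℂ) (n₀ : ℕ) (m : ℝ)
    (hres : ∀ n ≥ n₀, ∃ R : Hn n →L[ℂ] Hn n, ‖R‖ ≤ m ∧
      (∀ y : Hn n, ∃ h : R y ∈ (A0 n).domain,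
        (A0 n) ⟨R y, h⟩ + ∑ j : Fin M, l ^ ((j : ℕ) + 1) • A n j (R y) = y) ∧
      (∀ x : (A0 n).domain,
        R ((A0 n) x + ∑ j : Fin M, l ^ ((j : ℕ) + 1) • A n j (x : Hn n)) = (x : Hn n))) :
    ¬ ∃ μs : ℕ → ℂ,
      (∀ n : ℕ, ¬ ∃ R : Hn n →L[ℂ] Hn n,
        (∀ y : Hn n, ∃ h : R y ∈ (A0 n).domain,
          (A0 n) ⟨R y, h⟩ + ∑ j : Fin M, (μs n) ^ ((j : ℕ) + 1) • A n j (R y) = y) ∧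
        (∀ x : (A0 n).domain,
          R ((A0 n) x + ∑ j : Fin M, (μs n) ^ ((j : ℕ) + 1) • A n j (x : Hn n)) = (x : Hn n))) ∧
      Tendsto μs atTop (nhds l) := by
  rintro ⟨μs, hpoll, htend⟩
  -- the "smallness" function
  set g : ℂ → ℝ := fun μ => (∑ j : Fin M, ‖μ ^ ((j : ℕ) + 1) - l ^ ((j : ℕ) + 1)‖) * (K * m)
    with hg_def
  have hgcont : Continuous g := by
    apply Continuous.mul _ continuous_const
    exact continuous_finset_sum _ fun j _ => ((continuous_pow _).sub continuous_const).norm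
  have hgl : g l = 0 := by simp [hg_def]
  have htend_g : Tendsto (fun n => g (μs n)) atTop (nhds 0) := by
    have := (hgcont.tendsto l).comp htend
    rwa [hgl] at this
  have hev : ∀ᶠ n in atTop, g (μs n) < 1 := htend_g.eventually_lt_const one_pos
  obtain ⟨n, hn₀, hgn⟩ := ((eventually_ge_atTop n₀).and hev).exists
  obtain ⟨R, hRm, hright, hleft⟩ := hres n hn₀
  set μ := μs n with hμ
  apply hpoll n
  have hm0 : (0 : ℝ) ≤ m := le_trans (norm_nonneg R) hRm
  -- the perturbation
  set c : Fin M → ℂ := fun j => μ ^ ((j : ℕ) + 1) - l ^ ((j : ℕ) + 1) with hc_def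
  set P : Hn n →L[ℂ] Hn n := ∑ j : Fin M, c j • A n j with hP_def
  have hPapp : ∀ v : Hn n, P v = ∑ j : Fin M, c j • A n j v := by
    intro v
    simp [hP_def, ContinuousLinearMap.sum_apply]
  have hPnorm : ‖P‖ ≤ (∑ j : Fin M, ‖c j‖) * K := by
    calc ‖P‖ ≤ ∑ j : Fin M, ‖c j • A n j‖ := norm_sum_le _ _
      _ ≤ ∑ j : Fin M, ‖c j‖ * K := by
          apply Finset.sum_le_sum
          intro j _
          rw [norm_smul]
          exact mul_le_mul_of_nonneg_left (hK n j) (norm_nonneg _)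
      _ = (∑ j : Fin M, ‖c j‖) * K := by rw [Finset.sum_mul]
  have hsmall : ‖-(P.comp R)‖ < 1 := by
    rw [norm_neg]
    calc ‖P.comp R‖ ≤ ‖P‖ * ‖R‖ := P.opNorm_comp_le R
      _ ≤ ((∑ j : Fin M, ‖c j‖) * K) * m := by
          apply mul_le_mul hPnorm (le_trans hRm le_rfl) (norm_nonneg _)
          exact le_trans (norm_nonneg P) hPnorm
      _ = g μ := by rw [hg_def, hc_def]; ring
      _ < 1 := hgn
  set u : (Hn n →L[ℂ] Hn n)ˣ := Units.oneSub _ hsmall with hu_def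
  have huval : (u : Hn n →L[ℂ] Hn n) = 1 + P.comp R := by
    simp [hu_def, Units.oneSub, sub_neg_eq_add]
  have huapp : ∀ z : Hn n, (u : Hn n →L[ℂ] Hn n) z = z + P (R z) := by
    intro z; rw [huval]; simp
  set S : Hn n →L[ℂ] Hn n := ((u⁻¹ : (Hn n →L[ℂ] Hn n)ˣ) : Hn n →L[ℂ] Hn n) with hS_def
  have hUS : ∀ z : Hn n, (u : Hn n →L[ℂ] Hn n) (S z) = z := by
    intro z
    rw [hS_def, ← ContinuousLinearMap.mul_apply, u.mul_inv, ContinuousLinearMap.one_apply]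
  have hSU : ∀ z : Hn n, S ((u : Hn n →L[ℂ] Hn n) z) = z := by
    intro z
    rw [hS_def, ← ContinuousLinearMap.mul_apply, u.inv_mul, ContinuousLinearMap.one_apply]
  -- key sum identity
  have hsum : ∀ v : Hn n,
      (∑ j : Fin M, μ ^ ((j : ℕ) + 1) • A n j v)
        = (∑ j : Fin M, l ^ ((j : ℕ) + 1) • A n j v) + P v := by
    intro v
    rw [hPapp]
    rw [← Finset.sum_add_distrib]
    apply Finset.sum_congr rfl
    intro j _
    rw [hc_def]
    simp [sub_smul]
  refine ⟨R.comp S, ?_, ?_⟩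
  · intro y
    obtain ⟨h, hy⟩ := hright (S y)
    refine ⟨h, ?_⟩
    have : (A0 n) ⟨R (S y), h⟩ + ∑ j : Fin M, μ ^ ((j : ℕ) + 1) • A n j (R (S y)) = y := by
      rw [hsum, ← add_assoc, hy, ← huapp, hUS]
    exact this
  · intro x
    obtain ⟨x', hx'⟩ := x
    set z : Hn n := (A0 n) ⟨x', hx'⟩ + ∑ j : Fin M, l ^ ((j : ℕ) + 1) • A n j x' with hz_def
    have hRz : R z = x' := hleft ⟨x', hx'⟩
    have harg : (A0 n) ⟨x', hx'⟩ + ∑ j : Fin M, μ ^ ((j : ℕ) + 1) • A n j x'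
        = (u : Hn n →L[ℂ] Hn n) z := by
      rw [hsum, ← add_assoc, ← hz_def, huapp, hRz]
    show R (S ((A0 n) ⟨x', hx'⟩ + ∑ j : Fin M, μ ^ ((j : ℕ) + 1) • A n j x')) = x'
    rw [harg, hSU, hRz]
end

section
/- Let 𝒜 be a closed operator on a Hilbert space of the block form [[−iQ, B],[B*, 0]] where Q is bounded self-adjoint with 0 ≤ Q ≤ q·I and B is closed densely defined. If ω ∈ σ_app(𝒜) (approximate point spectrum) with ω ∉ iℝ, then Im ω ∈ [−q/2, 0]. -/
open Filter
open scoped InnerProductSpace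

/-- Let `𝒜 = [[−iQ, B], [B*, 0]]` be the block operator matrix in `H ⊕ H`
with domain `dom B* ⊕ dom B`, where `Q` is bounded self-adjoint with `0 ≤ Q ≤ q` and `B` is
closed and densely defined.  If `ω` is in the approximate point spectrum of `𝒜` — witnessed by
a Weyl sequence `(fₙ, gₙ)` with `‖fₙ‖² + ‖gₙ‖² = 1`, `−iQfₙ + Bgₙ − ωfₙ → 0` and
`B*fₙ − ωgₙ → 0` — and `ω ∉ iℝ`, then `Im ω ∈ [−q/2, 0]`. -/
theorem stmt_18 {H : Type*} [NormedAddCommGroup H] [InnerProductSpace ℂ H] [CompleteSpace H]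
    (B : H →ₗ.[ℂ] H) (hBdense : Dense (B.domain : Set H))
    (hBclosed : IsClosed (B.graph : Set (H × H)))
    (Q : H →L[ℂ] H) (hQsa : IsSelfAdjoint Q) (q : ℝ)
    (hQ : ∀ u : H, (⟪Q u, u⟫_ℂ).re ∈ Set.Icc (0 : ℝ) (q * ‖u‖ ^ 2))
    (ω : ℂ) (hωre : ω.re ≠ 0)
    (f : ℕ → B.adjoint.domain) (g : ℕ → B.domain)
    (hnorm : ∀ n, ‖(f n : H)‖ ^ 2 + ‖(g n : H)‖ ^ 2 = 1)
    (h1 : Tendsto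
      (fun n => ‖(-Complex.I) • Q ((f n : H)) + B (g n) - ω • ((f n : H))‖) atTop (nhds 0))
    (h2 : Tendsto (fun n => ‖B.adjoint (f n) - ω • ((g n : H))‖) atTop (nhds 0)) :
    ω.im ∈ Set.Icc (-q / 2) 0 := by
  -- real value of ⟪Q u, u⟫
  have hQreal : ∀ u : H, ⟪Q u, u⟫_ℂ = ((⟪Q u, u⟫_ℂ).re : ℂ) := by
    intro u
    have h : ⟪Q u, u⟫_ℂ = ⟪u, Q u⟫_ℂ := hQsa.isSymmetric u u
    have h2 : (starRingEnd ℂ) ⟪Q u, u⟫_ℂ = ⟪Q u, u⟫_ℂ := by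
      rw [inner_conj_symm]; exact h.symm
    exact (Complex.conj_eq_iff_re.mp h2).symm
  set r : ℕ → ℝ := fun n => (⟪Q ((f n : H)), ((f n : H))⟫_ℂ).re with hr
  set a : ℕ → H := fun n => (-Complex.I) • Q ((f n : H)) + B (g n) - ω • ((f n : H)) with ha
  set b : ℕ → H := fun n => B.adjoint (f n) - ω • ((g n : H)) with hb
  set u : ℕ → ℂ := fun n => ⟪((f n : H)), a n⟫_ℂ - ⟪b n, ((g n : H))⟫_ℂ with hu
  have hf1 : ∀ n, ‖(f n : H)‖ ≤ 1 := by
    intro n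
    nlinarith [hnorm n, sq_nonneg ‖(g n : H)‖, norm_nonneg (f n : H)]
  have hg1 : ∀ n, ‖(g n : H)‖ ≤ 1 := by
    intro n
    nlinarith [hnorm n, sq_nonneg ‖(f n : H)‖, norm_nonneg (g n : H)]
  -- u → 0
  have hu0 : Tendsto u atTop (nhds 0) := by
    have hbound : ∀ n, ‖u n‖ ≤ ‖a n‖ + ‖b n‖ := by
      intro n
      calc ‖u n‖ ≤ ‖⟪((f n : H)), a n⟫_ℂ‖ + ‖⟪b n, ((g n : H))⟫_ℂ‖ := norm_sub_le _ _
        _ ≤ ‖(f n : H)‖ * ‖a n‖ + ‖b n‖ * ‖(g n : H)‖ := by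
            gcongr <;> exact norm_inner_le_norm _ _
        _ ≤ ‖a n‖ + ‖b n‖ := by
            nlinarith [norm_nonneg (a n), norm_nonneg (b n), hf1 n, hg1 n,
              norm_nonneg ((f n : H)), norm_nonneg ((g n : H))]
    have hab : Tendsto (fun n => ‖a n‖ + ‖b n‖) atTop (nhds (0 + 0)) := h1.add h2
    rw [add_zero] at hab
    exact squeeze_zero_norm hbound hab
  -- explicit formula for u
  have hadj : ∀ n, ⟪(B.adjoint (f n) : H), ((g n : H))⟫_ℂ = ⟪((f n : H)), (B (g n) : H)⟫_ℂ :=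
    fun n => LinearPMap.adjoint_isFormalAdjoint hBdense (f n) (g n)
  have hcalc : ∀ n, u n = -Complex.I * (r n : ℂ) - ω * ((‖(f n : H)‖ ^ 2 : ℝ) : ℂ)
      + (starRingEnd ℂ) ω * ((‖(g n : H)‖ ^ 2 : ℝ) : ℂ) := by
    intro n
    simp only [hu, ha, hb]
    rw [inner_sub_right, inner_add_right, inner_sub_left]
    simp only [inner_smul_right, inner_smul_left, inner_self_eq_norm_sq_to_K]
    rw [hadj n]
    rw [show ⟪((f n : H)), Q ((f n : H))⟫_ℂ = ((r n : ℝ) : ℂ) by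
      rw [show ⟪((f n : H)), Q ((f n : H))⟫_ℂ = ⟪Q ((f n : H)), ((f n : H))⟫_ℂ from
        (hQsa.isSymmetric _ _).symm]; exact hQreal _]
    push_cast
    ring_nf
    rfl
  -- real and imaginary parts
  have hre : Tendsto (fun n => (u n).re) atTop (nhds 0) :=
    (Complex.continuous_re.tendsto 0).comp hu0
  have him : Tendsto (fun n => (u n).im) atTop (nhds 0) :=
    (Complex.continuous_im.tendsto 0).comp hu0
  have hure : ∀ n, (u n).re = ω.re * (‖(g n : H)‖ ^ 2 - ‖(f n : H)‖ ^ 2) := by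
    intro n; rw [hcalc n]
    simp [Complex.sub_re, Complex.add_re, Complex.mul_re, ← Complex.ofReal_pow]
    ring
  have huim : ∀ n, (u n).im = -(r n) - ω.im := by
    intro n; rw [hcalc n]
    have h := hnorm n
    simp [Complex.sub_im, Complex.add_im, Complex.mul_im, ← Complex.ofReal_pow]
    linear_combination (-ω.im) * h
  -- r → -ω.im
  have hrlim : Tendsto r atTop (nhds (-ω.im)) := by
    have : Tendsto (fun n => -(u n).im - ω.im) atTop (nhds (-ω.im)) := by
      simpa using (him.neg.sub tendsto_const_nhds)
    refine this.congr fun n => by rw [huim n]; ring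
  -- ‖f n‖² → 1/2
  have hflim : Tendsto (fun n => ‖(f n : H)‖ ^ 2) atTop (nhds (1 / 2)) := by
    have hdiff : Tendsto (fun n => ‖(g n : H)‖ ^ 2 - ‖(f n : H)‖ ^ 2) atTop (nhds 0) := by
      have : Tendsto (fun n => (u n).re / ω.re) atTop (nhds 0) := by
        simpa using hre.div_const ω.re
      refine this.congr fun n => ?_
      rw [hure n, mul_div_cancel_left₀ _ hωre]
    have : Tendsto (fun n => (1 - (‖(g n : H)‖ ^ 2 - ‖(f n : H)‖ ^ 2)) / 2) atTop
        (nhds ((1 - 0) / 2)) := ((tendsto_const_nhds.sub hdiff).div_const 2)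
    simp only [sub_zero] at this
    refine this.congr fun n => ?_
    have := hnorm n; linarith
  -- conclude
  have h0 : (0 : ℝ) ≤ -ω.im :=
    le_of_tendsto_of_tendsto' tendsto_const_nhds hrlim fun n => (hQ (f n)).1
  have hq2 : -ω.im ≤ q / 2 := by
    have hql : Tendsto (fun n => q * ‖(f n : H)‖ ^ 2) atTop (nhds (q * (1 / 2))) :=
      hflim.const_mul q
    have := le_of_tendsto_of_tendsto' hrlim hql fun n => (hQ (f n)).2
    linarith
  constructor <;> linarith
end

section
/- Let B be a closed densely defined operator between Hilbert spaces with reduced minimum modulus γ(B), and Q bounded self-adjoint with 0 ≤ Q ≤ q·I. Suppose ω ∈ ℂ with Re ω ≠ 0 and there exist unit-norm-bounded sequences f_n ≠ 0, g_n with Bg_n − (−iQ − ω)f_n → 0, ‖f_n‖ ≥ c > 0, g_n = g_n¹ + g_n² with g_n² ∈ ker B, ‖g_n¹‖² − ‖f_n‖² → 0, and 2 Im ω ‖f_n‖² + ⟨Qf_n, f_n⟩ → 0 with Im ω ≤ 0. Then γ(B)² ≤ 2q|Im ω| − 3(Im ω)² + (Re ω)². -/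
/-!
Put `K = 2q|Im ω| - 3 (Im ω)² + (Re ω)²` and `Tₙ = -i Q fₙ - ω fₙ`. Since `⟪Q f, f⟫` is real,
`‖Tₙ‖² = ‖Q fₙ‖² + 2 Im ω ⟪Q fₙ, fₙ⟫ + |ω|² ‖fₙ‖²`, and Cauchy–Schwarz for the positive form
`⟪Q ·, ·⟫` gives `‖Q f‖² ≤ q ⟪Q f, f⟫`; together (using `Im ω ≤ 0`)
`‖Tₙ‖² ≤ K ‖fₙ‖² + (q + 2 Im ω) (2 Im ω ‖fₙ‖² + ⟪Q fₙ, fₙ⟫)`, the last factor being a null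
sequence. On the other side, `gₙ¹ ⊥ ker B` gives `‖gₙ¹‖ ≤ dist(gₙ, ker B)`, hence
`γ(B) ‖gₙ¹‖ ≤ ‖B gₙ‖ ≤ ‖Tₙ‖ + o(1)`, while `‖gₙ¹‖² - ‖fₙ‖² → 0`. So `(γ(B)² - K) ‖fₙ‖²` is
bounded by a null sequence, and `‖fₙ‖ ≥ c > 0` forces `γ(B)² ≤ K`.
-/

open Filter
open scoped InnerProductSpace

noncomputable section

/-- The kernel of a partially defined operator `B`, as a subset of the ambient space. -/
def pKer {G H : Type*} [NormedAddCommGroup G] [InnerProductSpace ℂ G]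
    [NormedAddCommGroup H] [InnerProductSpace ℂ H] (B : G →ₗ.[ℂ] H) : Set G :=
  {x | ∃ hx : x ∈ B.domain, B ⟨x, hx⟩ = 0}

/-- The reduced minimum modulus `γ(B) = inf {‖Bx‖ / dist(x, ker B) : x ∈ dom B, Bx ≠ 0}`. -/
def redMinMod {G H : Type*} [NormedAddCommGroup G] [InnerProductSpace ℂ G]
    [NormedAddCommGroup H] [InnerProductSpace ℂ H] (B : G →ₗ.[ℂ] H) : ℝ :=
  sInf {r : ℝ | ∃ x : B.domain, B x ≠ 0 ∧ r = ‖B x‖ / Metric.infDist (x : G) (pKer B)}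

namespace LinearMap.IsPositive

variable {𝕜 E : Type*} [RCLike 𝕜] [NormedAddCommGroup E] [InnerProductSpace 𝕜 E]
  {T : E →ₗ[𝕜] E}

abbrev toPreInnerProductSpaceCore (hT : T.IsPositive) : PreInnerProductSpace.Core 𝕜 E where
  inner x y := ⟪T x, y⟫_𝕜
  conj_inner_symm x y := by rw [inner_conj_symm, hT.isSymmetric]
  re_inner_nonneg := hT.re_inner_nonneg_left
  add_left x y z := by rw [map_add, inner_add_left]
  smul_left x y r := by rw [map_smul, inner_smul_left]

theorem norm_inner_sq_le (hT : T.IsPositive) (x y : E) :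
    ‖⟪T x, y⟫_𝕜‖ ^ 2 ≤ RCLike.re ⟪T x, x⟫_𝕜 * RCLike.re ⟪T y, y⟫_𝕜 := by
  have h := @InnerProductSpace.Core.inner_mul_inner_self_le 𝕜 E _ _ _
    hT.toPreInnerProductSpaceCore x y
  change ‖⟪T x, y⟫_𝕜‖ * ‖⟪T y, x⟫_𝕜‖ ≤ RCLike.re ⟪T x, x⟫_𝕜 * RCLike.re ⟪T y, y⟫_𝕜 at h
  rwa [hT.isSymmetric y x, norm_inner_symm y, ← sq] at h

/-- Cauchy–Schwarz for `⟪T ·, ·⟫` at the pair `(x, T x)`. -/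
theorem norm_apply_sq_le (hT : T.IsPositive) {q : ℝ}
    (hq : ∀ x, RCLike.re ⟪T x, x⟫_𝕜 ≤ q * ‖x‖ ^ 2) (x : E) :
    ‖T x‖ ^ 2 ≤ q * RCLike.re ⟪T x, x⟫_𝕜 := by
  rcases (norm_nonneg (T x)).eq_or_lt with h0 | hpos
  · rw [← h0, norm_eq_zero.mp h0.symm]
    simp
  have h := hT.norm_inner_sq_le x (T x)
  rw [inner_self_eq_norm_sq_to_K, ← RCLike.ofReal_pow, RCLike.norm_ofReal,
    abs_of_nonneg (by positivity)] at h
  have hre := hT.re_inner_nonneg_left x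
  refine le_of_mul_le_mul_right ?_ (pow_pos hpos 2)
  calc ‖T x‖ ^ 2 * ‖T x‖ ^ 2 ≤ RCLike.re ⟪T x, x⟫_𝕜 * RCLike.re ⟪T (T x), T x⟫_𝕜 := by
        rwa [← sq]
    _ ≤ RCLike.re ⟪T x, x⟫_𝕜 * (q * ‖T x‖ ^ 2) := by gcongr; exact hq (T x)
    _ = q * RCLike.re ⟪T x, x⟫_𝕜 * ‖T x‖ ^ 2 := by ring

end LinearMap.IsPositive

theorem norm_neg_I_smul_sub_smul_sq {E : Type*} [NormedAddCommGroup E] [InnerProductSpace ℂ E]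
    (u v : E) (ω : ℂ) (h : (⟪u, v⟫_ℂ).im = 0) :
    ‖(-Complex.I) • u - ω • v‖ ^ 2 = ‖u‖ ^ 2 + 2 * ω.im * (⟪u, v⟫_ℂ).re + ‖ω‖ ^ 2 * ‖v‖ ^ 2 := by
  rw [@norm_sub_sq ℂ, inner_smul_left, inner_smul_right, norm_smul, norm_smul, mul_pow,
    mul_pow, norm_neg, Complex.norm_I]
  simp [h]
  ring

theorem norm_neg_I_smul_apply_sub_smul_le {H : Type*} [NormedAddCommGroup H]
    [InnerProductSpace ℂ H] (Q : H →L[ℂ] H) (ω : ℂ) (f : H) :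
    ‖(-Complex.I) • Q f - ω • f‖ ≤ (‖Q‖ + ‖ω‖) * ‖f‖ := by
  calc ‖(-Complex.I) • Q f - ω • f‖ ≤ ‖(-Complex.I) • Q f‖ + ‖ω • f‖ := norm_sub_le _ _
    _ = ‖Q f‖ + ‖ω‖ * ‖f‖ := by rw [norm_smul, norm_smul, norm_neg, Complex.norm_I, one_mul]
    _ ≤ (‖Q‖ + ‖ω‖) * ‖f‖ := by rw [add_mul]; gcongr; exact Q.le_opNorm f

theorem ContinuousLinearMap.IsPositive.norm_neg_I_smul_apply_sub_smul_sq_le {H : Type*}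
    [NormedAddCommGroup H] [InnerProductSpace ℂ H] {Q : H →L[ℂ] H} (hQ : Q.IsPositive)
    {q : ℝ} (hq : ∀ u, (⟪Q u, u⟫_ℂ).re ≤ q * ‖u‖ ^ 2) {ω : ℂ} (hω : ω.im ≤ 0) (f : H) :
    ‖(-Complex.I) • Q f - ω • f‖ ^ 2 ≤ (2 * q * |ω.im| - 3 * ω.im ^ 2 + ω.re ^ 2) * ‖f‖ ^ 2
      + (q + 2 * ω.im) * (2 * ω.im * ‖f‖ ^ 2 + (⟪Q f, f⟫_ℂ).re) := by
  rw [norm_neg_I_smul_sub_smul_sq (Q f) f ω (hQ.isSymmetric.im_inner_apply_self f),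
    abs_of_nonpos hω, Complex.sq_norm, Complex.normSq_apply]
  have hQf : ‖Q f‖ ^ 2 ≤ q * (⟪Q f, f⟫_ℂ).re := hQ.toLinearMap.norm_apply_sq_le hq f
  linarith

theorem Submodule.norm_le_infDist_add {𝕜 E : Type*} [RCLike 𝕜] [NormedAddCommGroup E]
    [InnerProductSpace 𝕜 E] (K : Submodule 𝕜 E) {x y : E} (hx : x ∈ Kᗮ) (hy : y ∈ K) :
    ‖x‖ ≤ Metric.infDist (x + y) K := by
  refine (Metric.le_infDist ⟨0, K.zero_mem⟩).mpr fun z hz => ?_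
  have hpyth := norm_add_sq_eq_norm_sq_add_norm_sq_of_inner_eq_zero x (y - z)
    (K.inner_left_of_mem_orthogonal (K.sub_mem hy hz) hx)
  rw [dist_eq_norm, add_sub_assoc, mul_self_le_mul_self_iff (norm_nonneg _) (norm_nonneg _),
    hpyth]
  exact le_add_of_nonneg_right (mul_self_nonneg _)

theorem nonpos_of_mul_le_of_tendsto_zero {ι : Type*} {l : Filter ι} [l.NeBot] {a c : ℝ}
    {x e : ι → ℝ} (hc : 0 < c) (hx : ∀ i, c ≤ x i) (h : ∀ i, a * x i ≤ e i)
    (he : Tendsto e l (nhds 0)) : a ≤ 0 := by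
  by_contra! ha
  have hac : a * c ≤ 0 :=
    ge_of_tendsto' he fun i => (mul_le_mul_of_nonneg_left (hx i) ha.le).trans (h i)
  exact (mul_pos ha hc).not_ge hac

section ReducedMinimumModulus

variable {G H : Type*} [NormedAddCommGroup G] [InnerProductSpace ℂ G]
  [NormedAddCommGroup H] [InnerProductSpace ℂ H] (B : G →ₗ.[ℂ] H)

theorem pKer_eq_map_ker : pKer B = (LinearMap.ker B.toFun).map B.domain.subtype := by
  ext x
  simp [pKer]

theorem coe_mem_pKer {x : B.domain} (hx : B x = 0) : (x : G) ∈ pKer B := ⟨x.2, hx⟩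

theorem redMinMod_nonneg : 0 ≤ redMinMod B := by
  refine Real.sInf_nonneg ?_
  rintro r ⟨x, -, rfl⟩
  exact div_nonneg (norm_nonneg _) Metric.infDist_nonneg

theorem redMinMod_mul_infDist_le (x : B.domain) :
    redMinMod B * Metric.infDist (x : G) (pKer B) ≤ ‖B x‖ := by
  rcases (Metric.infDist_nonneg (x := (x : G)) (s := pKer B)).eq_or_lt with h0 | hpos
  · rw [← h0, mul_zero]
    exact norm_nonneg _
  have hx : B x ≠ 0 := fun hx => hpos.ne' (Metric.infDist_zero_of_mem (coe_mem_pKer B hx))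
  rw [← le_div_iff₀ hpos]
  refine csInf_le ⟨0, ?_⟩ ⟨x, hx, rfl⟩
  rintro r ⟨y, -, rfl⟩
  exact div_nonneg (norm_nonneg _) Metric.infDist_nonneg

theorem redMinMod_mul_norm_le {g g₁ g₂ : B.domain} (hg : g = g₁ + g₂) (hg₂ : B g₂ = 0)
    (hg₁ : ∀ y ∈ pKer B, ⟪(g₁ : G), y⟫_ℂ = 0) : redMinMod B * ‖(g₁ : G)‖ ≤ ‖B g‖ := by
  have hdist : ‖(g₁ : G)‖ ≤ Metric.infDist (g : G) (pKer B) := by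
    have hK := pKer_eq_map_ker B
    rw [hg, Submodule.coe_add, hK]
    refine Submodule.norm_le_infDist_add _ ?_ (SetLike.mem_coe.mp (hK ▸ coe_mem_pKer B hg₂))
    exact (Submodule.mem_orthogonal' _ _).mpr fun z hz => hg₁ z (hK ▸ hz)
  calc redMinMod B * ‖(g₁ : G)‖ ≤ redMinMod B * Metric.infDist (g : G) (pKer B) :=
        mul_le_mul_of_nonneg_left hdist (redMinMod_nonneg B)
    _ ≤ ‖B g‖ := redMinMod_mul_infDist_le B g

theorem sq_redMinMod_sub_mul_norm_sq_le {Q : H →L[ℂ] H} (hQ : Q.IsPositive) {q : ℝ}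
    (hq : ∀ u, (⟪Q u, u⟫_ℂ).re ≤ q * ‖u‖ ^ 2) {ω : ℂ} (hω : ω.im ≤ 0) {f : H} (hf : ‖f‖ ≤ 1)
    {g g₁ g₂ : B.domain} (hg : g = g₁ + g₂) (hg₂ : B g₂ = 0)
    (hg₁ : ∀ y ∈ pKer B, ⟪(g₁ : G), y⟫_ℂ = 0) :
    (redMinMod B ^ 2 - (2 * q * |ω.im| - 3 * ω.im ^ 2 + ω.re ^ 2)) * ‖f‖ ^ 2 ≤
      (q + 2 * ω.im) * (2 * ω.im * ‖f‖ ^ 2 + (⟪Q f, f⟫_ℂ).re)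
      + 2 * ‖B g - ((-Complex.I) • Q f - ω • f)‖ * (‖Q‖ + ‖ω‖)
      + ‖B g - ((-Complex.I) • Q f - ω • f)‖ ^ 2
      - redMinMod B ^ 2 * (‖(g₁ : G)‖ ^ 2 - ‖f‖ ^ 2) := by
  set T := (-Complex.I) • Q f - ω • f
  set ε := ‖B g - T‖
  have hBg : redMinMod B * ‖(g₁ : G)‖ ≤ ‖T‖ + ε :=
    (redMinMod_mul_norm_le B hg hg₂ hg₁).trans (norm_le_norm_add_norm_sub' _ _)
  have hBg_sq : redMinMod B ^ 2 * ‖(g₁ : G)‖ ^ 2 ≤ (‖T‖ + ε) ^ 2 := by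
    rw [← mul_pow]
    exact pow_le_pow_left₀ (mul_nonneg (redMinMod_nonneg B) (norm_nonneg _)) hBg 2
  have hT : ‖T‖ ≤ ‖Q‖ + ‖ω‖ :=
    (norm_neg_I_smul_apply_sub_smul_le Q ω f).trans
      (mul_le_of_le_one_right (by positivity) hf)
  have hεT : ε * ‖T‖ ≤ ε * (‖Q‖ + ‖ω‖) := mul_le_mul_of_nonneg_left hT (norm_nonneg _)
  have hT_sq := hQ.norm_neg_I_smul_apply_sub_smul_sq_le hq hω f
  linarith

end ReducedMinimumModulus

theorem stmt_19_general {G H : Type*}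
    [NormedAddCommGroup G] [InnerProductSpace ℂ G]
    [NormedAddCommGroup H] [InnerProductSpace ℂ H] [CompleteSpace H]
    (B : G →ₗ.[ℂ] H)
    (Q : H →L[ℂ] H) (hQsa : IsSelfAdjoint Q) (q : ℝ)
    (hQ : ∀ u : H, (⟪Q u, u⟫_ℂ).re ∈ Set.Icc (0 : ℝ) (q * ‖u‖ ^ 2))
    (ω : ℂ) (hωim : ω.im ≤ 0)
    (f : ℕ → H) (hfbd : ∀ n, ‖f n‖ ≤ 1)
    (c : ℝ) (hc : 0 < c) (hfc : ∀ n, c ≤ ‖f n‖)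
    (g g1 g2 : ℕ → B.domain)
    (hsplit : ∀ n, g n = g1 n + g2 n)
    (hker : ∀ n, B (g2 n) = 0)
    (hperp : ∀ n, ∀ y ∈ pKer B, ⟪((g1 n : G)), y⟫_ℂ = 0)
    (hconv : Tendsto
      (fun n => ‖B (g n) - ((-Complex.I) • Q (f n) - ω • f n)‖) atTop (nhds 0))
    (hnorms : Tendsto (fun n => ‖(g1 n : G)‖ ^ 2 - ‖f n‖ ^ 2) atTop (nhds 0))
    (hform : Tendsto
      (fun n => 2 * ω.im * ‖f n‖ ^ 2 + (⟪Q (f n), f n⟫_ℂ).re) atTop (nhds 0)) :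
    (redMinMod B) ^ 2 ≤ 2 * q * |ω.im| - 3 * ω.im ^ 2 + ω.re ^ 2 := by
  have hQpos : Q.IsPositive :=
    ContinuousLinearMap.isPositive_def'.mpr ⟨hQsa, fun u => (hQ u).1⟩
  refine sub_nonpos.mp <| nonpos_of_mul_le_of_tendsto_zero (l := atTop) (pow_pos hc 2)
    (fun n => pow_le_pow_left₀ hc.le (hfc n) 2)
    (fun n => sq_redMinMod_sub_mul_norm_sq_le B hQpos (fun u => (hQ u).2) hωim (hfbd n)
      (hsplit n) (hker n) (hperp n)) ?_
  simpa using (((hform.const_mul (q + 2 * ω.im)).add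
    ((hconv.const_mul 2).mul_const (‖Q‖ + ‖ω‖))).add (hconv.pow 2)).sub
    (hnorms.const_mul (redMinMod B ^ 2))

/-- Let `B` be a closed densely defined operator between Hilbert spaces with
reduced minimum modulus `γ(B)`, and `Q` bounded self-adjoint with `0 ≤ Q ≤ q`.  Suppose
`Re ω ≠ 0`, `Im ω ≤ 0`, and there are norm-bounded sequences `fₙ` (with `‖fₙ‖ ≥ c > 0`) and
`gₙ = gₙ¹ + gₙ² ∈ dom B`, `gₙ² ∈ ker B`, `gₙ¹ ⊥ ker B`, such that
`Bgₙ − (−iQ − ω)fₙ → 0`, `‖gₙ¹‖² − ‖fₙ‖² → 0` and `2 Im ω ‖fₙ‖² + ⟨Qfₙ, fₙ⟩ → 0`.  Then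
`γ(B)² ≤ 2q|Im ω| − 3(Im ω)² + (Re ω)²`. -/
theorem stmt_19 {G H : Type*}
    [NormedAddCommGroup G] [InnerProductSpace ℂ G] [CompleteSpace G]
    [NormedAddCommGroup H] [InnerProductSpace ℂ H] [CompleteSpace H]
    (B : G →ₗ.[ℂ] H) (hBdense : Dense (B.domain : Set G))
    (hBclosed : IsClosed (B.graph : Set (G × H)))
    (Q : H →L[ℂ] H) (hQsa : IsSelfAdjoint Q) (q : ℝ)
    (hQ : ∀ u : H, (⟪Q u, u⟫_ℂ).re ∈ Set.Icc (0 : ℝ) (q * ‖u‖ ^ 2))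
    (ω : ℂ) (hωre : ω.re ≠ 0) (hωim : ω.im ≤ 0)
    (f : ℕ → H) (hfbd : ∀ n, ‖f n‖ ≤ 1)
    (c : ℝ) (hc : 0 < c) (hfc : ∀ n, c ≤ ‖f n‖)
    (g g1 g2 : ℕ → B.domain) (hgbd : ∀ n, ‖(g n : G)‖ ≤ 1)
    (hsplit : ∀ n, g n = g1 n + g2 n)
    (hker : ∀ n, B (g2 n) = 0)
    (hperp : ∀ n, ∀ y ∈ pKer B, ⟪((g1 n : G)), y⟫_ℂ = 0)
    (hconv : Tendsto
      (fun n => ‖B (g n) - ((-Complex.I) • Q (f n) - ω • f n)‖) atTop (nhds 0))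
    (hnorms : Tendsto (fun n => ‖(g1 n : G)‖ ^ 2 - ‖f n‖ ^ 2) atTop (nhds 0))
    (hform : Tendsto
      (fun n => 2 * ω.im * ‖f n‖ ^ 2 + (⟪Q (f n), f n⟫_ℂ).re) atTop (nhds 0)) :
    (redMinMod B) ^ 2 ≤ 2 * q * |ω.im| - 3 * ω.im ^ 2 + ω.re ^ 2 :=
  stmt_19_general B Q hQsa q hQ ω hωim f hfbd c hc hfc g g1 g2 hsplit hker hperp hconv hnorms hform

end
end
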